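/- arXiv:1806.07762 — 2 statements merged into one kernel-verified Lean document; each statement's English description precedes it below -/
import Mathlib

section
/- Let m be a positive integer and let α be a complex number with α ≠ 1/2. Then (-1)^{m+1} · (α^{2m} - (α-1)^{2m})/4 · π^{2m+2}/(2m)! + Σ_{k=1}^{m} (-1)^k (α^{2k-1} + (α-1)^{2k-1}) · π^{2k}/(2k-1)! · λ(2m-2k+2) = 0. -/
open Real Finset

/-- The Dirichlet lambda function at a natural-number argument `j`:
`λ(j) = ∑_{n=0}^∞ 1/(2n+1)^j`. -/
noncomputable def dirichletLambda (j : ℕ) : ℝ := ∑' n : ℕ, 1 / (2 * (n : ℝ) + 1) ^ j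

/-!
Since `λ(2j) = (1 - 2^{-2j}) ζ(2j)`, Euler's formula for `ζ(2j)` turns the identity, after
clearing the common factor `(-1)^m π^{2m+2} / (2 (2m+1)!)`, into the Bernoulli-number identity
`∑_{k=1}^m C(2m+1, 2k-1) (2^{2m-2k+2} - 1) B_{2m-2k+2} (α^{2k-1} + (α-1)^{2k-1})
  = (2m+1)/2 · (α^{2m} - (α-1)^{2m})`.
With `N = 2m+1` and `T(x) = 2^N B_N(x/2) - B_N(x) = ∑_l C(N, l) (2^{N-l} - 1) B_{N-l} x^l`,
the duplication formula `2^N (B_N(x/2) + B_N((x+1)/2)) = 2 B_N(x)` and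
`B_N(x+1) = B_N(x) + N x^{N-1}` give `T(α) + T(α-1) = -N (α-1)^{N-1}`. The left side above is the
odd-exponent part of `T(α) + T(α-1)`; among the even exponents only `l = 2m` survives, through
`B_1 = -1/2`, because the other Bernoulli numbers of odd index vanish.
-/

theorem bernoulliFun_ratCast (n : ℕ) (r : ℚ) :
    bernoulliFun n r = ((Polynomial.bernoulli n).eval r : ℚ) := by
  rw [bernoulliFun, Polynomial.eval_map, ← eq_ratCast (algebraMap ℚ ℝ),
    Polynomial.eval₂_at_apply, eq_ratCast]

namespace Polynomial

theorem two_pow_mul_bernoulli_eval_half_add (n : ℕ) (r : ℚ) :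
    2 ^ n * ((bernoulli n).eval (r / 2) + (bernoulli n).eval ((r + 1) / 2)) =
      2 * (bernoulli n).eval r := by
  have h := bernoulliFun_mul n two_ne_zero ((r / 2 : ℚ) : ℝ)
  simp only [sum_range_succ, sum_range_zero] at h
  rw [show ((2 : ℕ) : ℝ) * ((r / 2 : ℚ) : ℝ) = ((r : ℚ) : ℝ) by push_cast; ring,
    show ((r / 2 : ℚ) : ℝ) + (1 : ℕ) / (2 : ℕ) = (((r + 1) / 2 : ℚ) : ℝ) by push_cast; ring] at h
  simp only [bernoulliFun_ratCast, Nat.cast_zero, zero_div, add_zero, zero_add] at h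
  have hcast : ((2 * (bernoulli n).eval r : ℚ) : ℝ) =
      ((2 ^ n * ((bernoulli n).eval (r / 2) + (bernoulli n).eval ((r + 1) / 2)) : ℚ) : ℝ) := by
    push_cast
    rw [h]
    ring
  exact_mod_cast hcast.symm

theorem two_pow_mul_bernoulli_comp_half_add (n : ℕ) :
    (2 : ℚ[X]) ^ n * ((bernoulli n).comp (C 2⁻¹ * X) + (bernoulli n).comp (C 2⁻¹ * (X + 1))) =
      2 * bernoulli n :=
  Polynomial.funext fun r => by
    simpa [div_eq_inv_mul] using two_pow_mul_bernoulli_eval_half_add n r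

section Field

variable {K : Type*} [Field K] [CharZero K]

theorem aeval_bernoulli_eq_sum (n : ℕ) (x : K) :
    aeval x (bernoulli n) =
      ∑ l ∈ range (n + 1), (_root_.bernoulli (n - l) : K) * n.choose l * x ^ l := by
  simp [bernoulli_def, aeval_monomial, mul_comm]

theorem aeval_bernoulli_add_one (n : ℕ) (x : K) :
    aeval (x + 1) (bernoulli n) = aeval x (bernoulli n) + n * x ^ (n - 1) := by
  simpa [aeval_comp, add_comm] using congrArg (aeval x) (bernoulli_comp_one_add_X n)

theorem two_pow_mul_aeval_bernoulli_half_add (n : ℕ) (x : K) :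
    2 ^ n * (aeval (x / 2) (bernoulli n) + aeval ((x + 1) / 2) (bernoulli n)) =
      2 * aeval x (bernoulli n) := by
  simpa [aeval_comp, div_eq_inv_mul, map_ofNat] using
    congrArg (aeval x) (two_pow_mul_bernoulli_comp_half_add n)

theorem two_pow_mul_aeval_bernoulli_half_sub (n : ℕ) (x : K) :
    2 ^ n * aeval (x / 2) (bernoulli n) - aeval x (bernoulli n) =
      ∑ l ∈ range (n + 1),
        (_root_.bernoulli (n - l) : K) * n.choose l * (2 ^ (n - l) - 1) * x ^ l := by
  rw [aeval_bernoulli_eq_sum, aeval_bernoulli_eq_sum, mul_sum, ← sum_sub_distrib]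
  refine sum_congr rfl fun l hl => ?_
  have hpow : (2 : K) ^ n = 2 ^ (n - l) * 2 ^ l := by
    rw [← pow_add, Nat.sub_add_cancel (mem_range_succ_iff.mp hl)]
  rw [hpow, div_pow]
  field_simp

theorem sum_bernoulli_mul_two_pow_sub_one_mul_pow_add_sub_one_pow (n : ℕ) (x : K) :
    ∑ l ∈ range (n + 1), (_root_.bernoulli (n - l) : K) * n.choose l * (2 ^ (n - l) - 1) *
      (x ^ l + (x - 1) ^ l) = -n * (x - 1) ^ (n - 1) := by
  have hhalf := two_pow_mul_aeval_bernoulli_half_add n (x - 1)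
  have hshift := aeval_bernoulli_add_one n (x - 1)
  rw [sub_add_cancel] at hhalf hshift
  simp only [mul_add, sum_add_distrib, ← two_pow_mul_aeval_bernoulli_half_sub]
  linear_combination hhalf - hshift

end Field

end Polynomial

theorem Finset.sum_range_two_mul {M : Type*} [AddCommMonoid M] (f : ℕ → M) (n : ℕ) :
    ∑ i ∈ range (2 * n), f i = ∑ k ∈ range n, (f (2 * k) + f (2 * k + 1)) := by
  induction n with
  | zero => simp
  | succ n ih => rw [Nat.mul_succ, sum_range_succ, sum_range_succ, sum_range_succ, ih, add_assoc]

theorem sum_Icc_bernoulli_even_mul_odd_pow_add_sub_one_pow {K : Type*} [Field K] [CharZero K]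
    (m : ℕ) (x : K) :
    ∑ k ∈ Icc 1 m, (bernoulli (2 * m - 2 * k + 2) : K) * (2 * m + 1).choose (2 * k - 1) *
      (2 ^ (2 * m - 2 * k + 2) - 1) * (x ^ (2 * k - 1) + (x - 1) ^ (2 * k - 1)) =
      (2 * m + 1) / 2 * (x ^ (2 * m) - (x - 1) ^ (2 * m)) := by
  set g : ℕ → K := fun l => (bernoulli (2 * m + 1 - l) : K) * (2 * m + 1).choose l *
    (2 ^ (2 * m + 1 - l) - 1) * (x ^ l + (x - 1) ^ l) with hg
  have htotal : ∑ l ∈ range (2 * (m + 1)), g l = -(2 * m + 1) * (x - 1) ^ (2 * m) := by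
    have h := Polynomial.sum_bernoulli_mul_two_pow_sub_one_mul_pow_add_sub_one_pow (2 * m + 1) x
    rw [show 2 * m + 1 + 1 = 2 * (m + 1) by ring, Nat.add_sub_cancel] at h
    rw [h]
    push_cast
    ring
  have heven_part : ∑ k ∈ range (m + 1), g (2 * k) =
      -(2 * m + 1) / 2 * (x ^ (2 * m) + (x - 1) ^ (2 * m)) := by
    rw [sum_eq_single_of_mem m (self_mem_range_succ m)]
    · simp only [hg]
      rw [show 2 * m + 1 - 2 * m = 1 by omega, Nat.choose_succ_self_right, bernoulli_one]
      push_cast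
      ring
    · intro k hk hkm
      have hodd_index : Odd (2 * m + 1 - 2 * k) := ⟨m - k, by have := mem_range.mp hk; omega⟩
      simp [hg, bernoulli_eq_zero_of_odd hodd_index (by have := mem_range.mp hk; omega)]
  have hodd_part : ∑ k ∈ range (m + 1), g (2 * k + 1) = ∑ k ∈ Icc 1 m, g (2 * k - 1) := by
    rw [sum_range_succ, show g (2 * m + 1) = 0 by simp [hg], add_zero,
      ← Ico_add_one_right_eq_Icc, sum_Ico_eq_sum_range, Nat.add_sub_cancel]
    refine sum_congr rfl fun k _ => ?_
    rw [show 2 * (1 + k) - 1 = 2 * k + 1 by omega]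
  rw [sum_range_two_mul, sum_add_distrib, heven_part, hodd_part] at htotal
  rw [sum_congr rfl fun k hk => show _ = g (2 * k - 1) by
    simp only [hg]
    rw [show 2 * m + 1 - (2 * k - 1) = 2 * m - 2 * k + 2 by have := mem_Icc.mp hk; omega]]
  linear_combination htotal

theorem dirichletLambda_eq_mul_tsum {j : ℕ} (hj : 1 < j) :
    dirichletLambda j = (1 - (2 ^ j)⁻¹) * ∑' n : ℕ, 1 / (n : ℝ) ^ j := by
  set f : ℕ → ℝ := fun n => 1 / (n : ℝ) ^ j with hf
  have hsum : Summable f := Real.summable_one_div_nat_pow.mpr hj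
  have heven : ∑' n, f (2 * n) = (2 ^ j)⁻¹ * ∑' n, f n := by
    rw [← tsum_mul_left]
    congr 1 with n
    simp only [hf]
    push_cast
    rw [mul_pow, one_div, one_div, mul_inv]
  have hodd : ∑' n, f (2 * n + 1) = dirichletLambda j := by
    simp only [hf, dirichletLambda]
    push_cast
    rfl
  have hsplit := tsum_even_add_odd (hsum.comp_injective (mul_right_injective₀ two_ne_zero))
    (hsum.comp_injective fun a b h => by simpa using h)
  rw [heven, hodd] at hsplit
  linear_combination hsplit

theorem dirichletLambda_two_mul {k : ℕ} (hk : k ≠ 0) :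
    dirichletLambda (2 * k) = (-1) ^ (k + 1) * (2 ^ (2 * k) - 1) * π ^ (2 * k) *
      bernoulli (2 * k) / (2 * (2 * k).factorial) := by
  rw [dirichletLambda_eq_mul_tsum (by omega), (hasSum_zeta_nat hk).tsum_eq,
    show (2 : ℝ) ^ (2 * k - 1) = 2 ^ (2 * k) / 2 by
      rw [eq_div_iff two_ne_zero, ← pow_succ]; congr 1; omega]
  field_simp

theorem neg_one_pow_mul_pi_pow_div_factorial_mul_dirichletLambda {m k : ℕ} (hk : 1 ≤ k)
    (hkm : k ≤ m) :
    (-1) ^ k * (π ^ (2 * k) / (2 * k - 1).factorial) * dirichletLambda (2 * m - 2 * k + 2) =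
      (-1) ^ m * π ^ (2 * m + 2) / (2 * (2 * m + 1).factorial) *
        (bernoulli (2 * m - 2 * k + 2) * (2 * m + 1).choose (2 * k - 1) *
          (2 ^ (2 * m - 2 * k + 2) - 1)) := by
  obtain ⟨i, rfl⟩ : ∃ i, k = i + 1 := ⟨k - 1, by omega⟩
  obtain ⟨j, rfl⟩ : ∃ j, m = i + 1 + j := ⟨m - i - 1, by omega⟩
  rw [show 2 * (i + 1 + j) - 2 * (i + 1) + 2 = 2 * (j + 1) by omega,
    dirichletLambda_two_mul (by omega : j + 1 ≠ 0),
    Nat.cast_choose ℝ (show 2 * (i + 1) - 1 ≤ 2 * (i + 1 + j) + 1 by omega),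
    show 2 * (i + 1 + j) + 1 - (2 * (i + 1) - 1) = 2 * (j + 1) by omega,
    show 2 * (i + 1) - 1 = 2 * i + 1 by omega]
  field_simp
  ring

theorem lambda_recurrence_family_odd_general (m : ℕ) (α : ℂ) :
    (-1 : ℂ) ^ (m + 1) * ((α ^ (2 * m) - (α - 1) ^ (2 * m)) / 4) *
        ((π : ℂ) ^ (2 * m + 2) / (Nat.factorial (2 * m))) +
      ∑ k ∈ Finset.Icc 1 m,
        (-1 : ℂ) ^ k * (α ^ (2 * k - 1) + (α - 1) ^ (2 * k - 1)) *
          ((π : ℂ) ^ (2 * k) / (Nat.factorial (2 * k - 1))) *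
            (dirichletLambda (2 * m - 2 * k + 2) : ℂ) = 0 := by
  have hterm : ∀ k ∈ Icc 1 m,
      (-1 : ℂ) ^ k * (α ^ (2 * k - 1) + (α - 1) ^ (2 * k - 1)) *
          ((π : ℂ) ^ (2 * k) / (Nat.factorial (2 * k - 1))) *
            (dirichletLambda (2 * m - 2 * k + 2) : ℂ) =
        (-1) ^ m * π ^ (2 * m + 2) / (2 * (2 * m + 1).factorial) *
          (bernoulli (2 * m - 2 * k + 2) * (2 * m + 1).choose (2 * k - 1) *
            (2 ^ (2 * m - 2 * k + 2) - 1) * (α ^ (2 * k - 1) + (α - 1) ^ (2 * k - 1))) := by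
    intro k hk
    have h := congrArg ((↑) : ℝ → ℂ) <|
      neg_one_pow_mul_pi_pow_div_factorial_mul_dirichletLambda (mem_Icc.mp hk).1 (mem_Icc.mp hk).2
    push_cast at h
    linear_combination (α ^ (2 * k - 1) + (α - 1) ^ (2 * k - 1)) * h
  rw [sum_congr rfl hterm, ← mul_sum, sum_Icc_bernoulli_even_mul_odd_pow_add_sub_one_pow,
    Nat.factorial_succ]
  have hN : (2 * m + 1 : ℂ) ≠ 0 := by exact_mod_cast (2 * m).succ_ne_zero
  push_cast
  field_simp
  ring

theorem lambda_recurrence_family_odd (m : ℕ) (hm : 0 < m) (α : ℂ) (hα : α ≠ 1 / 2) :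
    (-1 : ℂ) ^ (m + 1) * ((α ^ (2 * m) - (α - 1) ^ (2 * m)) / 4) *
        ((π : ℂ) ^ (2 * m + 2) / (Nat.factorial (2 * m))) +
      ∑ k ∈ Finset.Icc 1 m,
        (-1 : ℂ) ^ k * (α ^ (2 * k - 1) + (α - 1) ^ (2 * k - 1)) *
          ((π : ℂ) ^ (2 * k) / (Nat.factorial (2 * k - 1))) *
            (dirichletLambda (2 * m - 2 * k + 2) : ℂ) = 0 :=
  lambda_recurrence_family_odd_general m α
end

section
/- Let m be a nonnegative integer and let α be a complex number. Then (-1)^{m+1} · (α^{2m+1} - (α-1)^{2m+1})/4 · π^{2m+2}/(2m+1)! + Σ_{k=0}^{m} (-1)^k (α^{2k} + (α-1)^{2k}) · π^{2k}/(2k)! · λ(2m-2k+2) = 0, where 0^0 is interpreted as 1. -/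
/-!
With `t` a formal variable, `∑_{k ≥ 1} λ(2k) t^(2k) = (πt/4) tan(πt/2)`: through `ζ(2k)` in terms of
Bernoulli numbers and `λ(2k) = (1 - 2^(-2k)) ζ(2k)`, this series is `-(x tanh x)/2` at
`x = iπt/2`, and `x tanh x = B(4x) - B(2x) + x` for the Bernoulli series `B(x) = x / (eˣ - 1)`.
The identity is the coefficient of `t^(2m+2)` in
`(cos απt + cos (α-1)πt) · (πt/4) tan(πt/2) = (πt/4) (sin απt - sin (α-1)πt)`,
which follows from `tanh · cosh = sinh` after the sum-to-product formulas factor both sides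
through `cos ((2α-1)πt/2)`.
-/

open Real Finset

open scoped Nat

theorem Finset.sum_range_two_mul_add_one_of_odd_eq_zero {M : Type*} [AddCommMonoid M]
    {f : ℕ → M} (hf : ∀ i, f (2 * i + 1) = 0) (n : ℕ) :
    ∑ i ∈ range (2 * n + 1), f i = ∑ k ∈ range (n + 1), f (2 * k) := by
  induction n with
  | zero => simp
  | succ n ih =>
    rw [show 2 * (n + 1) + 1 = 2 * n + 1 + 1 + 1 by ring, sum_range_succ, sum_range_succ, ih, hf,
      add_zero, sum_range_succ _ (n + 1)]
    rfl

theorem dirichletLambda_eq_of_hasSum {j : ℕ} {z : ℝ}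
    (hz : HasSum (fun n : ℕ ↦ 1 / (n : ℝ) ^ j) z) : dirichletLambda j = (1 - 1 / 2 ^ j) * z := by
  have heven : HasSum (fun n : ℕ ↦ 1 / ((2 * n : ℕ) : ℝ) ^ j) (1 / 2 ^ j * z) := by
    refine (hz.mul_left (1 / 2 ^ j)).congr_fun fun n ↦ ?_
    push_cast
    rw [mul_pow, one_div_mul_one_div]
  have hodd : HasSum (fun n : ℕ ↦ 1 / ((2 * n + 1 : ℕ) : ℝ) ^ j) (dirichletLambda j) := by
    have hs : Summable fun n : ℕ ↦ 1 / ((2 * n + 1 : ℕ) : ℝ) ^ j :=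
      hz.summable.comp_injective fun a b h ↦ by have : 2 * a + 1 = 2 * b + 1 := h; omega
    convert hs.hasSum using 1
    simp only [dirichletLambda, Nat.cast_add, Nat.cast_mul, Nat.cast_ofNat, Nat.cast_one]
  have := (HasSum.even_add_odd (f := fun n : ℕ ↦ 1 / (n : ℝ) ^ j) heven hodd).unique hz
  linear_combination this

namespace PowerSeries

theorem coeff_two_mul_mul_of_odd_coeff_eq_zero {R : Type*} [CommSemiring R] {f : R⟦X⟧}
    (hf : ∀ k, coeff (2 * k + 1) f = 0) (g : R⟦X⟧) (n : ℕ) :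
    coeff (2 * n) (f * g) = ∑ p ∈ antidiagonal n, coeff (2 * p.1) f * coeff (2 * p.2) g := by
  rw [coeff_mul, Nat.sum_antidiagonal_eq_sum_range_succ (fun i j ↦ coeff i f * coeff j g),
    sum_range_two_mul_add_one_of_odd_eq_zero (by simp [hf]),
    Nat.sum_antidiagonal_eq_sum_range_succ (fun i j ↦ coeff (2 * i) f * coeff (2 * j) g)]
  simp only [Nat.mul_sub]

section Hyperbolic

/-! Below, `rescale a (exp K) + rescale (-a) (exp K)` and `rescale a (exp K) - rescale (-a) (exp K)`
are `2 cosh (a X)` and `2 sinh (a X)`; lemma names call them `cosh` and `sinh`. -/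

/-- The power series of `X tanh X`, since `B(4X) - B(2X) + X = X (e^(2X) - 1) / (e^(2X) + 1)`
for `B(X) = X / (e^X - 1)`. -/
noncomputable def xTanhSeries (K : Type*) [Field K] [CharZero K] : K⟦X⟧ :=
  rescale 4 (bernoulliPowerSeries K) - rescale 2 (bernoulliPowerSeries K) + X

variable {K : Type*} [Field K] [CharZero K]

theorem xTanhSeries_mul_cosh :
    xTanhSeries K * (exp K + rescale (-1) (exp K)) = X * (exp K - rescale (-1) (exp K)) := by
  have hB (c : K) : rescale c (bernoulliPowerSeries K) * (rescale c (exp K) - 1) = C c * X := by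
    simpa [rescale_X] using congrArg (rescale c) (bernoulliPowerSeries_mul_exp_sub_one K)
  have h2 := hB 2
  have h4 := hB 4
  rw [map_ofNat] at h2 h4
  have hexp4 : rescale (4 : K) (exp K) = rescale 2 (exp K) * rescale 2 (exp K) := by
    rw [exp_mul_exp_eq_exp_add]; norm_num
  have hexp1 : exp K = rescale (-1) (exp K) * rescale 2 (exp K) := by
    rw [exp_mul_exp_eq_exp_add]; norm_num
  have hne : rescale (4 : K) (exp K) - 1 ≠ 0 := fun h ↦ by
    have h4 : (4 : K) = 0 := by simpa [coeff_rescale] using congrArg (coeff 1) h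
    norm_num at h4
  -- after multiplying by `e^(4X) - 1`, both Bernoulli series cancel via `B(cX) (e^(cX) - 1) = cX`
  apply mul_right_cancel₀ hne
  rw [hexp4] at h4 ⊢
  unfold xTanhSeries
  linear_combination (exp K + rescale (-1) (exp K)) * (h4 - (rescale 2 (exp K) + 1) * h2) -
    2 * (X : K⟦X⟧) * (rescale 2 (exp K) - 1) * hexp1

theorem coeff_zero_rescale_xTanhSeries (c : K) : coeff 0 (rescale c (xTanhSeries K)) = 0 := by
  simp only [xTanhSeries, coeff_rescale, map_add, map_sub, pow_zero, one_mul, sub_self,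
    coeff_zero_X, add_zero]

theorem cosh_add_cosh_mul_rescale_xTanhSeries (v c : K) :
    (rescale (v + c) (exp K) + rescale (-(v + c)) (exp K) +
        (rescale (v - c) (exp K) + rescale (-(v - c)) (exp K))) * rescale c (xTanhSeries K) =
      C c * X * (rescale (v + c) (exp K) - rescale (-(v + c)) (exp K) -
        (rescale (v - c) (exp K) - rescale (-(v - c)) (exp K))) := by
  have h := congrArg (rescale c) (xTanhSeries_mul_cosh (K := K))
  simp only [map_mul, map_add, map_sub, rescale_rescale, rescale_X, neg_one_mul] at h
  rw [show -(v + c) = -v + -c by ring, show v - c = v + -c by ring,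
    show -(v + -c) = -v + c by ring]
  simp only [← exp_mul_exp_eq_exp_add]
  linear_combination (rescale v (exp K) + rescale (-v) (exp K)) * h

theorem coeff_rescale_exp (a : K) (n : ℕ) : coeff n (rescale a (exp K)) = a ^ n / n ! := by
  simp [coeff_rescale, coeff_exp, div_eq_mul_inv]

theorem coeff_two_mul_cosh (a : K) (k : ℕ) :
    coeff (2 * k) (rescale a (exp K) + rescale (-a) (exp K)) = 2 * (a ^ 2) ^ k / (2 * k)! := by
  rw [map_add, coeff_rescale_exp, coeff_rescale_exp, (even_two_mul k).neg_pow, pow_mul]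
  ring

theorem coeff_two_mul_add_one_cosh (a : K) (k : ℕ) :
    coeff (2 * k + 1) (rescale a (exp K) + rescale (-a) (exp K)) = 0 := by
  rw [map_add, coeff_rescale_exp, coeff_rescale_exp, (odd_two_mul_add_one k).neg_pow]
  ring

theorem coeff_two_mul_add_one_sinh (a : K) (k : ℕ) :
    coeff (2 * k + 1) (rescale a (exp K) - rescale (-a) (exp K)) =
      2 * a * (a ^ 2) ^ k / (2 * k + 1)! := by
  rw [map_sub, coeff_rescale_exp, coeff_rescale_exp, (odd_two_mul_add_one k).neg_pow, pow_succ,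
    pow_mul]
  ring

theorem sum_antidiagonal_mul_coeff_rescale_xTanhSeries (v c : K) (m : ℕ) :
    ∑ p ∈ antidiagonal m, (((v + c) ^ 2) ^ p.1 + ((v - c) ^ 2) ^ p.1) / (2 * p.1)! *
        coeff (2 * p.2 + 2) (rescale c (xTanhSeries K)) =
      c * ((v + c) * ((v + c) ^ 2) ^ m - (v - c) * ((v - c) ^ 2) ^ m) / (2 * m + 1)! := by
  have h := congrArg (coeff (2 * (m + 1))) (cosh_add_cosh_mul_rescale_xTanhSeries v c)
  rw [coeff_two_mul_mul_of_odd_coeff_eq_zero (fun k ↦ by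
      rw [map_add, coeff_two_mul_add_one_cosh, coeff_two_mul_add_one_cosh, add_zero]),
    Nat.sum_antidiagonal_succ', mul_zero, coeff_zero_rescale_xTanhSeries, mul_zero, zero_add,
    mul_assoc (C c), coeff_C_mul, show 2 * (m + 1) = 2 * m + 1 + 1 by ring, coeff_succ_X_mul,
    map_sub, coeff_two_mul_add_one_sinh, coeff_two_mul_add_one_sinh] at h
  simp only [map_add _ (_ + _) (_ + _), coeff_two_mul_cosh, mul_add_one] at h
  rw [← mul_right_inj' (two_ne_zero' K), mul_sum]
  refine (sum_congr rfl fun p _ ↦ ?_).trans (h.trans ?_) <;> ring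

end Hyperbolic

open Complex

theorem coeff_two_mul_add_two_rescale_xTanhSeries (k : ℕ) :
    coeff (2 * k + 2) (rescale (I * π / 2) (xTanhSeries ℂ)) =
      -2 * dirichletLambda (2 * k + 2) := by
  have hlam := dirichletLambda_eq_of_hasSum (hasSum_zeta_nat k.add_one_ne_zero)
  rw [show 2 * (k + 1) - 1 = 2 * k + 1 by omega, show 2 * (k + 1) = 2 * k + 2 by ring] at hlam
  rw [hlam]
  simp only [xTanhSeries, map_add, map_sub, coeff_rescale, bernoulliPowerSeries, coeff_mk,
    coeff_X, if_neg (show 2 * k + 2 ≠ 1 by omega), map_div₀, map_natCast, eq_ratCast]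
  push_cast
  rw [div_pow, mul_pow, show 2 * k + 2 = 2 * (k + 1) by ring, pow_mul I, I_sq,
    show (4 : ℂ) = 2 ^ 2 by norm_num, ← pow_mul]
  field_simp
  ring

end PowerSeries

open PowerSeries Complex in
theorem lambda_recurrence_family_even (m : ℕ) (α : ℂ) :
    (-1 : ℂ) ^ (m + 1) * ((α ^ (2 * m + 1) - (α - 1) ^ (2 * m + 1)) / 4) *
        ((π : ℂ) ^ (2 * m + 2) / (Nat.factorial (2 * m + 1))) +
      ∑ k ∈ Finset.range (m + 1),
        (-1 : ℂ) ^ k * (α ^ (2 * k) + (α - 1) ^ (2 * k)) *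
          ((π : ℂ) ^ (2 * k) / (Nat.factorial (2 * k))) *
            (dirichletLambda (2 * m - 2 * k + 2) : ℂ) = 0 := by
  have hsq (z : ℂ) (k : ℕ) : ((I * π * z) ^ 2) ^ k = (-1) ^ k * π ^ (2 * k) * z ^ (2 * k) := by
    rw [show (I * π * z) ^ 2 = -1 * (π ^ 2 * z ^ 2) by rw [mul_pow, mul_pow, I_sq]; ring, mul_pow,
      mul_pow, ← pow_mul, ← pow_mul, mul_assoc]
  have key := sum_antidiagonal_mul_coeff_rescale_xTanhSeries
    (I * π * (2 * α - 1) / 2) (I * π / 2) m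
  rw [show I * π * (2 * α - 1) / 2 + I * π / 2 = I * π * α by ring,
    show I * π * (2 * α - 1) / 2 - I * π / 2 = I * π * (α - 1) by ring] at key
  have hsum : ∑ k ∈ range (m + 1), (-1 : ℂ) ^ k * (α ^ (2 * k) + (α - 1) ^ (2 * k)) *
        ((π : ℂ) ^ (2 * k) / (2 * k)!) * (dirichletLambda (2 * m - 2 * k + 2) : ℂ) =
      -1 / 2 * (I * π / 2 * (I * π * α * ((I * π * α) ^ 2) ^ m -
        I * π * (α - 1) * ((I * π * (α - 1)) ^ 2) ^ m) / (2 * m + 1)!) := by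
    rw [← key, Nat.sum_antidiagonal_eq_sum_range_succ_mk, mul_sum]
    refine sum_congr rfl fun k hk ↦ ?_
    rw [hsq, hsq, coeff_two_mul_add_two_rescale_xTanhSeries,
      show 2 * m - 2 * k + 2 = 2 * (m - k) + 2 by rw [mem_range] at hk; omega]
    ring
  rw [hsum, hsq, hsq]
  linear_combination (-1 / 4 : ℂ) * π ^ 2 * (α * ((-1) ^ m * π ^ (2 * m) * α ^ (2 * m)) -
    (α - 1) * ((-1) ^ m * π ^ (2 * m) * (α - 1) ^ (2 * m))) / (2 * m + 1)! * I_sq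
end
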